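/- For nonnegative integers $k \le m$ and real $z$, $\sum_{j=k}^m (-1)^j \binom{m+1-z}{m-j}\binom{j}{k} = (-1)^m \binom{z-1}{m-k}$. -/

import Mathlib

/-- Generalized binomial coefficient for a real number `z` and natural `j`. -/
noncomputable def rchoose (z : ℝ) (j : ℕ) : ℝ :=
  (∏ i ∈ Finset.range j, (z - i)) / (j.factorial : ℝ)

lemma rchoose_zero (z : ℝ) : rchoose z 0 = 1 := by simp [rchoose]

lemma rchoose_succ_mul (x : ℝ) (n : ℕ) :
    (n + 1 : ℝ) * rchoose x (n + 1) = (x - n) * rchoose x n := by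
  rw [rchoose, rchoose, Finset.prod_range_succ, Nat.factorial_succ]
  push_cast
  field_simp

lemma rchoose_reflect (x : ℝ) (n : ℕ) :
    rchoose x n = (-1 : ℝ) ^ n * rchoose ((n : ℝ) - 1 - x) n := by
  have h : ((-1 : ℝ)) ^ n * (-1 : ℝ) ^ n = 1 := by
    rw [← pow_add, ← two_mul, pow_mul]; norm_num
  have hprod : (∏ i ∈ Finset.range n, (((n : ℝ) - 1 - x) - i))
      = (-1 : ℝ) ^ n * ∏ i ∈ Finset.range n, (x - i) := by
    calc ∏ i ∈ Finset.range n, (((n : ℝ) - 1 - x) - i)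
        = ∏ i ∈ Finset.range n, ((-1 : ℝ) * (x - ((n : ℝ) - 1 - i))) :=
          Finset.prod_congr rfl fun i _ => by ring
      _ = (-1 : ℝ) ^ n * ∏ i ∈ Finset.range n, (x - ((n : ℝ) - 1 - i)) := by
          rw [Finset.prod_mul_distrib, Finset.prod_const, Finset.card_range]
      _ = (-1 : ℝ) ^ n * ∏ i ∈ Finset.range n, (x - i) := by
          congr 1
          rw [← Finset.prod_range_reflect (fun j => x - (j : ℝ)) n]
          refine Finset.prod_congr rfl fun i hi => ?_
          have hi' : i < n := Finset.mem_range.mp hi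
          congr 1
          push_cast [Nat.cast_sub (show i ≤ n - 1 by omega),
            Nat.cast_sub (show 1 ≤ n by omega)]
          ring
  rw [rchoose, rchoose, hprod, ← mul_div_assoc, ← mul_assoc, h, one_mul]

lemma rchoose_vandermonde (x y : ℝ) (N : ℕ) :
    ∑ n ∈ Finset.range (N + 1), rchoose x n * rchoose y (N - n) = rchoose (x + y) N := by
  induction N with
  | zero => simp [rchoose_zero]
  | succ N ih =>
    have key : (N + 1 : ℝ) * ∑ n ∈ Finset.range (N + 2), rchoose x n * rchoose y (N + 1 - n)
        = (x + y - N) * rchoose (x + y) N := by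
      rw [← ih, Finset.mul_sum, Finset.mul_sum]
      have expand : ∀ n ∈ Finset.range (N + 1),
          (x + y - N) * (rchoose x n * rchoose y (N - n))
          = (n + 1 : ℝ) * rchoose x (n + 1) * rchoose y (N - n)
            + rchoose x n * (((N - n : ℕ) + 1 : ℝ) * rchoose y (N - n + 1)) := by
        intro n hn
        have hn' : n ≤ N := Nat.lt_succ_iff.mp (Finset.mem_range.mp hn)
        rw [rchoose_succ_mul, rchoose_succ_mul]
        have : ((N - n : ℕ) : ℝ) = (N : ℝ) - n := by
          push_cast [Nat.cast_sub hn']; ring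
        rw [this]
        ring
      rw [Finset.sum_congr rfl expand, Finset.sum_add_distrib]
      have e1 : ∑ n ∈ Finset.range (N + 1),
          (n + 1 : ℝ) * rchoose x (n + 1) * rchoose y (N - n)
          = ∑ n ∈ Finset.range (N + 2), (n : ℝ) * (rchoose x n * rchoose y (N + 1 - n)) := by
        conv_rhs => rw [Finset.sum_range_succ']
        simp only [Nat.cast_zero, zero_mul, add_zero]
        refine Finset.sum_congr rfl fun n hn => ?_
        have hn' : n ≤ N := Nat.lt_succ_iff.mp (Finset.mem_range.mp hn)
        have : N + 1 - (n + 1) = N - n := by omega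
        rw [this]
        push_cast
        ring
      have e2 : ∑ n ∈ Finset.range (N + 1),
          rchoose x n * (((N - n : ℕ) + 1 : ℝ) * rchoose y (N - n + 1))
          = ∑ n ∈ Finset.range (N + 2), ((N : ℝ) + 1 - n) * (rchoose x n * rchoose y (N + 1 - n)) := by
        conv_rhs => rw [Finset.sum_range_succ]
        have : ((N : ℝ) + 1 - (N + 1 : ℕ)) = 0 := by push_cast; ring
        rw [this, zero_mul, add_zero]
        refine Finset.sum_congr rfl fun n hn => ?_
        have hn' : n ≤ N := Nat.lt_succ_iff.mp (Finset.mem_range.mp hn)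
        have h1 : N - n + 1 = N + 1 - n := by omega
        have h2 : ((N - n : ℕ) : ℝ) = (N : ℝ) - n := by
          push_cast [Nat.cast_sub hn']; ring
        rw [h1, h2]
        ring
      rw [e1, e2, ← Finset.sum_add_distrib]
      refine Finset.sum_congr rfl fun n hn => ?_
      ring
    have h2 : (N + 1 : ℝ) * rchoose (x + y) (N + 1) = (x + y - N) * rchoose (x + y) N :=
      rchoose_succ_mul (x + y) N
    have hN : (N + 1 : ℝ) ≠ 0 := by positivity
    exact mul_left_cancel₀ hN (key.trans h2.symm)

lemma rchoose_natCast (n j : ℕ) (h : j ≤ n) : rchoose (n : ℝ) j = (n.choose j : ℝ) := by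
  rw [rchoose]
  have : ∏ i ∈ Finset.range j, ((n : ℝ) - i) = ((n.descFactorial j : ℕ) : ℝ) := by
    rw [Nat.descFactorial_eq_prod_range, Nat.cast_prod]
    refine Finset.prod_congr rfl fun i hi => ?_
    have : i < j := Finset.mem_range.mp hi
    rw [Nat.cast_sub (by omega)]
  rw [this, Nat.descFactorial_eq_factorial_mul_choose]
  push_cast
  rw [mul_comm, mul_div_assoc, div_self (by positivity : (j.factorial : ℝ) ≠ 0), mul_one]

theorem alternating_binomial_sum_eval (k m : ℕ) (hkm : k ≤ m) (z : ℝ) :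
    ∑ j ∈ Finset.Icc k m,
        (-1 : ℝ) ^ j * rchoose ((m : ℝ) + 1 - z) (m - j) * (j.choose k : ℝ)
      = (-1 : ℝ) ^ m * rchoose (z - 1) (m - k) := by
  set N := m - k with hN
  set w : ℝ := (m : ℝ) + 1 - z with hw
  have hmk : m = k + N := by omega
  -- reindex Icc k m as range (N+1) with j = k + i
  have hIcc : Finset.Icc k m = Finset.map (addLeftEmbedding k) (Finset.range (N + 1)) := by
    ext j
    simp [addLeftEmbedding, Finset.mem_map, Finset.mem_range]
    constructor
    · rintro ⟨h1, h2⟩; exact ⟨j - k, by omega, by omega⟩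
    · rintro ⟨i, hi, rfl⟩; omega
  rw [hIcc, Finset.sum_map]
  simp only [addLeftEmbedding, Function.Embedding.coeFn_mk]
  have step : ∀ i ∈ Finset.range (N + 1),
      (-1 : ℝ) ^ (k + i) * rchoose w (m - (k + i)) * ((k + i).choose k : ℝ)
      = (-1 : ℝ) ^ k * (rchoose (-1 - (k : ℝ)) i * rchoose w (N - i)) := by
    intro i hi
    have hi' : i ≤ N := Nat.lt_succ_iff.mp (Finset.mem_range.mp hi)
    have h1 : m - (k + i) = N - i := by omega
    have h2 : ((k + i).choose k : ℝ) = (-1 : ℝ) ^ i * rchoose (-1 - (k : ℝ)) i := by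
      have hc : (k + i).choose k = (k + i).choose i := Nat.choose_symm_add
      rw [hc, ← rchoose_natCast (k + i) i (by omega), rchoose_reflect]
      congr 2
      push_cast
      ring
    rw [h1, h2]
    have hsgn : (-1 : ℝ) ^ (k + i) * (-1 : ℝ) ^ i = (-1 : ℝ) ^ k := by
      rw [pow_add, mul_assoc, ← pow_add, ← two_mul, pow_mul]
      norm_num
    calc (-1 : ℝ) ^ (k + i) * rchoose w (N - i) * ((-1 : ℝ) ^ i * rchoose (-1 - (k : ℝ)) i)
        = ((-1 : ℝ) ^ (k + i) * (-1 : ℝ) ^ i) * (rchoose w (N - i) * rchoose (-1 - (k : ℝ)) i) := by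
          ring
      _ = (-1 : ℝ) ^ k * (rchoose (-1 - (k : ℝ)) i * rchoose w (N - i)) := by rw [hsgn]; ring
  rw [Finset.sum_congr rfl step, ← Finset.mul_sum, rchoose_vandermonde]
  have harg : (-1 : ℝ) - (k : ℝ) + w = (N : ℝ) - z := by
    rw [hw, hmk]
    push_cast
    ring
  rw [harg, rchoose_reflect ((N : ℝ) - z) N]
  have harg2 : (N : ℝ) - 1 - ((N : ℝ) - z) = z - 1 := by ring
  rw [harg2, ← mul_assoc, ← pow_add, hmk]
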